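/- arXiv:1709.08139 — 5 statements merged into one kernel-verified Lean document; each statement's English description precedes it below -/
import Mathlib

section
/- (Hunter's single-row perturbation formula.) Let W be an n×n row-stochastic, irreducible, aperiodic matrix with stationary distribution π and mean first passage time matrix (m_{ij}). Let W̃ be another row-stochastic, irreducible, aperiodic matrix that differs from W only in row r, with perturbations ε_k = w̃_{rk} − w_{rk} (so Σ_k ε_k = 0), and let π̃ be the stationary distribution of W̃. Then for every state j, π_j − π̃_j = π_j · π̃_r · Σ_{k ≠ j} ε_k m_{kj}. -/
/-!
Summing the one-hop equations for column `j` against any probability vector `v` gives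
`v j * m j j = 1 - ∑_{k ≠ j} (v - v W) k * m k j`. For `v = π` the defect vanishes, which is
Kac's formula `π j * m j j = 1`; for `v = π̃` the defect is `π̃ - π̃ W = π̃ r • (W̃ r - W r)`,
because `W̃` and `W` differ only in row `r`. Multiplying the second identity by `π j` and
using the first yields the formula.
-/

open Matrix Finset Filter

/-- `W` is row-stochastic: nonnegative entries, each row sums to 1. -/
def RowStochastic {n : ℕ} (W : Matrix (Fin n) (Fin n) ℝ) : Prop :=
  (∀ i j, 0 ≤ W i j) ∧ ∀ i, ∑ j, W i j = 1

/-- `W` is irreducible and aperiodic, i.e. primitive: some power has all entries positive. -/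
def Primitive {n : ℕ} (W : Matrix (Fin n) (Fin n) ℝ) : Prop :=
  ∃ N : ℕ, ∀ i j, 0 < (W ^ N) i j

/-- `π` is the stationary distribution of `W`: positive entries, summing to 1, `πᵀ W = πᵀ`. -/
def IsStationaryDist {n : ℕ} (W : Matrix (Fin n) (Fin n) ℝ) (π : Fin n → ℝ) : Prop :=
  (∀ i, 0 < π i) ∧ (∑ i, π i = 1) ∧ π ᵥ* W = π

/-- `M` is a mean first passage time matrix of `W`: positive entries satisfying the
one-hop conditioning equations `m i j = 1 + ∑_{k ≠ j} w i k * m k j`. -/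
def IsMFPT {n : ℕ} (W M : Matrix (Fin n) (Fin n) ℝ) : Prop :=
  (∀ i j, 0 < M i j) ∧ ∀ i j, M i j = 1 + ∑ k, if k ≠ j then W i k * M k j else 0

theorem sum_ite_ne_eq_sum_erase {ι M : Type*} [Fintype ι] [DecidableEq ι] [AddCommMonoid M]
    (f : ι → M) (j : ι) : (∑ k, if k ≠ j then f k else 0) = ∑ k ∈ univ.erase j, f k := by
  rw [← sum_filter, filter_ne']

theorem vecMul_sub_vecMul_of_rows_eq {ι R : Type*} [Fintype ι] [DecidableEq ι] [CommRing R]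
    {A B : Matrix ι ι R} {r : ι} (hrow : ∀ i, i ≠ r → B i = A i) (v : ι → R) :
    v ᵥ* B - v ᵥ* A = v r • (B r - A r) := by
  ext k
  simp only [Pi.sub_apply, Pi.smul_apply, smul_eq_mul, vecMul, dotProduct, ← sum_sub_distrib,
    ← mul_sub]
  exact sum_eq_single r (fun i _ hi => by rw [hrow i hi, sub_self, mul_zero]) (by simp)

namespace IsMFPT

variable {n : ℕ} {W M : Matrix (Fin n) (Fin n) ℝ}

theorem eq_one_add_sum_erase (hM : IsMFPT W M) (i j : Fin n) :
    M i j = 1 + ∑ k ∈ univ.erase j, W i k * M k j := by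
  rw [hM.2 i j, sum_ite_ne_eq_sum_erase]

theorem sum_mul_col_eq (hM : IsMFPT W M) {v : Fin n → ℝ} (hv : ∑ i, v i = 1) (j : Fin n) :
    ∑ i, v i * M i j = 1 + ∑ k ∈ univ.erase j, (v ᵥ* W) k * M k j := by
  calc ∑ i, v i * M i j = ∑ i, (v i + ∑ k ∈ univ.erase j, v i * W i k * M k j) := by
        refine sum_congr rfl fun i _ => ?_
        rw [hM.eq_one_add_sum_erase i j, mul_add, mul_one, mul_sum]
        simp only [mul_assoc]
    _ = 1 + ∑ k ∈ univ.erase j, (v ᵥ* W) k * M k j := by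
        rw [sum_add_distrib, hv, sum_comm]
        simp only [vecMul, dotProduct, sum_mul]

theorem mul_diag_eq (hM : IsMFPT W M) {v : Fin n → ℝ} (hv : ∑ i, v i = 1) (j : Fin n) :
    v j * M j j = 1 - ∑ k ∈ univ.erase j, (v k - (v ᵥ* W) k) * M k j := by
  have h := hM.sum_mul_col_eq hv j
  rw [← add_sum_erase _ _ (mem_univ j)] at h
  simp only [sub_mul, sum_sub_distrib]
  linarith

theorem stationary_mul_diag_eq_one (hM : IsMFPT W M) {π : Fin n → ℝ} (hsum : ∑ i, π i = 1)
    (hfix : π ᵥ* W = π) (j : Fin n) : π j * M j j = 1 := by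
  simp [hM.mul_diag_eq hsum j, hfix]

end IsMFPT

theorem hunter_single_row_perturbation_general {n : ℕ}
    (W W' : Matrix (Fin n) (Fin n) ℝ) (π π' : Fin n → ℝ) (M : Matrix (Fin n) (Fin n) ℝ)
    (hπ : IsStationaryDist W π)
    (hM : IsMFPT W M)
    (hπ' : IsStationaryDist W' π')
    (r : Fin n) (hrow : ∀ i, i ≠ r → ∀ k, W' i k = W i k) :
    ∀ j, π j - π' j =
      π j * π' r * ∑ k, if k ≠ j then (W' r k - W r k) * M k j else 0 := by
  intro j
  have hkac := hM.stationary_mul_diag_eq_one hπ.2.1 hπ.2.2 j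
  have hdefect : π' - π' ᵥ* W = π' r • (W' r - W r) := by
    simpa only [hπ'.2.2] using
      vecMul_sub_vecMul_of_rows_eq (fun i hi => funext (hrow i hi)) π'
  have hperturbed := hM.mul_diag_eq hπ'.2.1 j
  simp only [← Pi.sub_apply π', hdefect, Pi.smul_apply, smul_eq_mul, mul_assoc, ← mul_sum]
    at hperturbed
  rw [sum_ite_ne_eq_sum_erase (fun k => (W' r k - W r k) * M k j)]
  linear_combination π' j * hkac - π j * hperturbed

/-- Hunter's single-row perturbation formula. If `W̃` differs from `W`
only in row `r`, with perturbations `ε k = W̃ r k − W r k`, then for every state `j`,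
`π j − π̃ j = π j · π̃ r · ∑_{k ≠ j} ε k · m k j`. -/
theorem hunter_single_row_perturbation {n : ℕ}
    (W W' : Matrix (Fin n) (Fin n) ℝ) (π π' : Fin n → ℝ) (M : Matrix (Fin n) (Fin n) ℝ)
    (hW : RowStochastic W) (hprim : Primitive W) (hπ : IsStationaryDist W π)
    (hM : IsMFPT W M)
    (hW' : RowStochastic W') (hprim' : Primitive W') (hπ' : IsStationaryDist W' π')
    (r : Fin n) (hrow : ∀ i, i ≠ r → ∀ k, W' i k = W i k) :
    ∀ j, π j - π' j =
      π j * π' r * ∑ k, if k ≠ j then (W' r k - W r k) * M k j else 0 :=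
  hunter_single_row_perturbation_general W W' π π' M hπ hM hπ' r hrow
end

section
/- (Single-edge perturbation, general formula.) Let W be an n×n row-stochastic, irreducible, aperiodic matrix with stationary distribution π and mean first passage time matrix (m_{ij}), satisfying rational selfishness at node r. Let W̃ be the single-edge perturbation of W by edge (r,c) with weight θ, assumed irreducible and aperiodic, with stationary distribution π̃. Then for every state j, π̃_j = π_j · [ 1 − θ·(m_{cj}·(1 − δ{j=c}) − m_{rj} + 1) / (m_{rr} + θ·(m_{cr} − m_{rr} + 1)) ], where δ{j=c} is 1 if j = c and 0 otherwise. -/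
open Matrix Finset Filter

/-- The single-edge perturbation `W̃ = W − θ·diag(e r)·W + θ·(e r)(e c)ᵀ` of `W` by the
directed edge `(r, c)` with weight `θ`: row `r` of `W` is multiplied by `1 − θ` and `θ`
is added in entry `(r, c)`. -/
def EdgePerturb {n : ℕ} (W : Matrix (Fin n) (Fin n) ℝ) (r c : Fin n) (θ : ℝ) :
    Matrix (Fin n) (Fin n) ℝ :=
  Matrix.of fun i j => if i = r then (1 - θ) * W i j + (if j = c then θ else 0) else W i j

/-!
Zero the diagonal entry of the `j`-th column of the mean first passage time matrix `M`; the
one-hop equations say `W` maps this vector `m` to the `j`-th column of `M` minus `1`. Pairing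
`m` with a stationary distribution `v` of the perturbed chain `W̃`, and using `v ⬝ (W̃ m) = v ⬝ m`,
gives `v j * M j j = 1 - θ * v r * (m c - M r j + 1)`. For `θ = 0` this is Kac's formula
`π j * M j j = 1`; for `j = r` it determines `π̃ r`, and dividing the two cases yields the
formula for `π̃ j / π j`.
-/

def colZeroDiag {ι R : Type*} [DecidableEq ι] [Zero R] (M : Matrix ι ι R) (j : ι) : ι → R :=
  fun k => if k = j then 0 else M k j

lemma dotProduct_colZeroDiag {ι R : Type*} [Fintype ι] [DecidableEq ι] [CommRing R]
    (v : ι → R) (M : Matrix ι ι R) (j : ι) : v ⬝ᵥ colZeroDiag M j = v ⬝ᵥ (fun k => M k j) - v j * M j j := by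
  have h : colZeroDiag M j = (fun k => M k j) - Pi.single j (M j j) := by
    ext k
    by_cases hk : k = j
    · subst hk; simp [colZeroDiag]
    · simp [colZeroDiag, hk]
  rw [h, dotProduct_sub, dotProduct_single]

lemma mulVec_colZeroDiag {n : ℕ} {W M : Matrix (Fin n) (Fin n) ℝ}
    (hM : ∀ i j, M i j = 1 + ∑ k, if k ≠ j then W i k * M k j else 0) (j : Fin n) :
    W *ᵥ colZeroDiag M j = fun i => M i j - 1 := by
  ext i
  rw [hM i j, add_sub_cancel_left, mulVec, dotProduct]
  refine Finset.sum_congr rfl fun k _ => ?_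
  by_cases hk : k = j <;> simp [colZeroDiag, hk]

lemma edgePerturb_mulVec {n : ℕ} (W : Matrix (Fin n) (Fin n) ℝ) (r c : Fin n) (θ : ℝ)
    (x : Fin n → ℝ) :
    EdgePerturb W r c θ *ᵥ x = W *ᵥ x + Pi.single r (θ * (x c - (W *ᵥ x) r)) := by
  ext i
  by_cases hi : i = r
  · subst hi
    simp only [EdgePerturb, mulVec, dotProduct, of_apply, if_true, Pi.add_apply,
      Pi.single_eq_same, add_mul, Finset.sum_add_distrib, ite_mul, zero_mul,
      Finset.sum_ite_eq', Finset.mem_univ, mul_assoc, ← Finset.mul_sum]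
    ring
  · simp [EdgePerturb, mulVec, dotProduct, hi]

lemma edgePerturb_zero {n : ℕ} (W : Matrix (Fin n) (Fin n) ℝ) (r c : Fin n) :
    EdgePerturb W r c 0 = W := by
  ext i k
  simp [EdgePerturb]

lemma edgePerturb_stationary_mul_diag {n : ℕ} {W M : Matrix (Fin n) (Fin n) ℝ}
    (hM : ∀ i j, M i j = 1 + ∑ k, if k ≠ j then W i k * M k j else 0)
    (r c : Fin n) (θ : ℝ) {v : Fin n → ℝ} (hv1 : ∑ i, v i = 1)
    (hv : v ᵥ* EdgePerturb W r c θ = v) (j : Fin n) :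
    v j * M j j = 1 - θ * v r * (colZeroDiag M j c - M r j + 1) := by
  have h : v ⬝ᵥ (EdgePerturb W r c θ *ᵥ colZeroDiag M j) = v ⬝ᵥ colZeroDiag M j := by
    rw [dotProduct_mulVec, hv]
  rw [edgePerturb_mulVec, mulVec_colZeroDiag hM, dotProduct_colZeroDiag, dotProduct_add,
    dotProduct_single] at h
  have hsub : v ⬝ᵥ (fun i => M i j - 1) = v ⬝ᵥ (fun i => M i j) - 1 := by
    simp only [dotProduct, mul_sub, mul_one, Finset.sum_sub_distrib, hv1]
  rw [hsub] at h
  linear_combination h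

lemma kac_formula {n : ℕ} {W M : Matrix (Fin n) (Fin n) ℝ}
    (hM : ∀ i j, M i j = 1 + ∑ k, if k ≠ j then W i k * M k j else 0)
    {π : Fin n → ℝ} (hπ : IsStationaryDist W π) (j : Fin n) : π j * M j j = 1 := by
  have h := edgePerturb_stationary_mul_diag hM j j 0 hπ.2.1 (by rw [edgePerturb_zero]; exact hπ.2.2) j
  simpa using h

theorem single_edge_perturbation_general {n : ℕ}
    (W : Matrix (Fin n) (Fin n) ℝ) (π : Fin n → ℝ) (M : Matrix (Fin n) (Fin n) ℝ)
    (hπ : IsStationaryDist W π) (hM : IsMFPT W M)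
    (r c : Fin n) (hrc : r ≠ c)
    (θ : ℝ)
    (π' : Fin n → ℝ)
    (hπ' : IsStationaryDist (EdgePerturb W r c θ) π') :
    ∀ j, π' j = π j *
      (1 - θ * (M c j * (if j = c then 0 else 1) - M r j + 1) /
        (M r r + θ * (M c r - M r r + 1))) := by
  intro j
  set Δ := M r r + θ * (M c r - M r r + 1)
  set A := M c j * (if j = c then 0 else 1) - M r j + 1
  have hA : colZeroDiag M j c - M r j + 1 = A := by
    by_cases hjc : j = c
    · subst hjc; simp [A, colZeroDiag]
    · simp [A, colZeroDiag, hjc, Ne.symm hjc]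
  have hj := edgePerturb_stationary_mul_diag hM.2 r c θ hπ'.2.1 hπ'.2.2 j
  have hr := edgePerturb_stationary_mul_diag hM.2 r c θ hπ'.2.1 hπ'.2.2 r
  rw [hA] at hj
  rw [colZeroDiag, if_neg hrc.symm] at hr
  have hΔ : π' r * Δ = 1 := by linear_combination hr
  have hΔ0 : Δ ≠ 0 := right_ne_zero_of_mul_eq_one hΔ
  have hcancel : (π' j * Δ) * M j j = (π j * (Δ - θ * A)) * M j j := by
    linear_combination Δ * hj - θ * A * hΔ - (Δ - θ * A) * kac_formula hM.2 hπ j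
  have hπ'j := mul_right_cancel₀ (hM.1 j j).ne' hcancel
  field_simp
  linear_combination hπ'j

/-- Single-edge perturbation, general formula. -/
theorem single_edge_perturbation {n : ℕ}
    (W : Matrix (Fin n) (Fin n) ℝ) (π : Fin n → ℝ) (M : Matrix (Fin n) (Fin n) ℝ)
    (hW : RowStochastic W) (hprim : Primitive W) (hπ : IsStationaryDist W π) (hM : IsMFPT W M)
    (r c : Fin n) (hrc : r ≠ c) (hWrc : W r c = 0)
    (θ : ℝ) (hθ0 : 0 < θ) (hθ1 : θ ≤ 1)
    (hself : ∀ j, j ≠ r → W r j < W r r)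
    (π' : Fin n → ℝ) (hprim' : Primitive (EdgePerturb W r c θ))
    (hπ' : IsStationaryDist (EdgePerturb W r c θ) π') :
    ∀ j, π' j = π j *
      (1 - θ * (M c j * (if j = c then 0 else 1) - M r j + 1) /
        (M r r + θ * (M c r - M r r + 1))) :=
  single_edge_perturbation_general W π M hπ hM r c hrc θ π' hπ'
end

section
/- (Single-edge perturbation, source-node formula.) Let W be an n×n row-stochastic, irreducible, aperiodic matrix with stationary distribution π and mean first passage time matrix (m_{ij}), satisfying rational selfishness at node r. Let W̃ be the single-edge perturbation of W by edge (r,c) with weight θ, assumed irreducible and aperiodic, with stationary distribution π̃. Then the denominator m_{rr} + θ·(m_{cr} − m_{rr} + 1) is strictly positive and π̃_r = 1 / (m_{rr} + θ·(m_{cr} − m_{rr} + 1)). -/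
/-!
Column `r` of `M`, with its `r`-th entry replaced by `D = m_rr + θ (m_cr - m_rr + 1)`, solves the
first passage equations into `r` for `W̃`: only row `r` changes, and from `r` the perturbed chain
now stays on the old row with probability `1 - θ` and jumps to `c` with probability `θ`.
Pairing any solution `x` of the first passage equations into `j` with a stationary distribution
`π` gives Kac's formula `π_j x_j = 1`, because the transition part of the equations is absorbed by
`π W = π`. Hence `π̃_r D = 1`, and `D > 0` since `π̃_r > 0`.
-/

open Matrix Finset Filter

section FirstPassage

variable {ι : Type*} [Fintype ι] [DecidableEq ι]

/-- Zeroing the `j`-th entry of `x` stops the chain on arrival at `j`. -/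
def IsFirstPassageTo (P : Matrix ι ι ℝ) (j : ι) (x : ι → ℝ) : Prop :=
  x = 1 + P *ᵥ Function.update x j 0

theorem isFirstPassageTo_iff (P : Matrix ι ι ℝ) (j : ι) (x : ι → ℝ) :
    IsFirstPassageTo P j x ↔ ∀ i, x i = 1 + ∑ k, if k ≠ j then P i k * x k else 0 := by
  refine funext_iff.trans (forall_congr' fun i => ?_)
  simp only [Pi.add_apply, Pi.one_apply, mulVec, dotProduct, Function.update_apply]
  refine Iff.of_eq (congrArg _ (congrArg _ (Finset.sum_congr rfl fun k _ => ?_)))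
  split_ifs <;> simp_all

theorem IsMFPT.isFirstPassageTo {n : ℕ} {W M : Matrix (Fin n) (Fin n) ℝ} (hM : IsMFPT W M)
    (j : Fin n) : IsFirstPassageTo W j (fun i => M i j) :=
  (isFirstPassageTo_iff W j _).2 fun i => hM.2 i j

theorem IsFirstPassageTo.stationary_mul_eq_one {P : Matrix ι ι ℝ} {j : ι} {x π : ι → ℝ}
    (hx : IsFirstPassageTo P j x) (hπP : π ᵥ* P = π) (hπ : ∑ i, π i = 1) : π j * x j = 1 := by
  have hpair : π ⬝ᵥ x = 1 + π ⬝ᵥ Function.update x j 0 := by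
    conv_lhs => rw [hx]
    rw [dotProduct_add, dotProduct_mulVec, hπP, dotProduct_one, hπ]
  rw [Pi.update_eq_sub_add_single, Pi.single_zero, add_zero, dotProduct_sub,
    dotProduct_single] at hpair
  linarith

end FirstPassage

theorem edgePerturb_mulVec_apply {n : ℕ} (W : Matrix (Fin n) (Fin n) ℝ) (r c : Fin n) (θ : ℝ)
    (v : Fin n → ℝ) (i : Fin n) :
    (EdgePerturb W r c θ *ᵥ v) i =
      if i = r then (1 - θ) * (W *ᵥ v) i + θ * v c else (W *ᵥ v) i := by
  split_ifs with hi <;>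
    simp [mulVec, dotProduct, EdgePerturb, hi, add_mul, Finset.sum_add_distrib, Finset.mul_sum,
      mul_assoc]

theorem IsFirstPassageTo.edgePerturb {n : ℕ} {W : Matrix (Fin n) (Fin n) ℝ} {r c : Fin n}
    {m : Fin n → ℝ} (hm : IsFirstPassageTo W r m)
    (hrc : r ≠ c) (θ : ℝ) :
    IsFirstPassageTo (EdgePerturb W r c θ) r
      (Function.update m r (m r + θ * (m c - m r + 1))) := by
  have hrow : ∀ i, m i = 1 + (W *ᵥ Function.update m r 0) i := fun i => congrFun hm i
  unfold IsFirstPassageTo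
  rw [Function.update_idem]
  funext i
  simp only [Pi.add_apply, Pi.one_apply, edgePerturb_mulVec_apply,
    Function.update_of_ne hrc.symm]
  by_cases hi : i = r
  · subst hi
    simp only [Function.update_self, if_true]
    linear_combination (1 - θ) * hrow i
  · simp only [Function.update_of_ne hi, hi, if_false]
    exact hrow i

theorem single_edge_perturbation_source_general {n : ℕ}
    (W : Matrix (Fin n) (Fin n) ℝ) (M : Matrix (Fin n) (Fin n) ℝ)
    (hM : IsMFPT W M)
    (r c : Fin n) (hrc : r ≠ c)
    (θ : ℝ)
    (π' : Fin n → ℝ)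
    (hπ' : IsStationaryDist (EdgePerturb W r c θ) π') :
    0 < M r r + θ * (M c r - M r r + 1) ∧
      π' r = 1 / (M r r + θ * (M c r - M r r + 1)) := by
  obtain ⟨hπ'pos, hπ'sum, hπ'stat⟩ := hπ'
  have hkac := ((hM.isFirstPassageTo r).edgePerturb hrc θ).stationary_mul_eq_one hπ'stat hπ'sum
  rw [Function.update_self] at hkac
  exact ⟨pos_of_mul_pos_right (hkac.symm ▸ one_pos) (hπ'pos r).le,
    eq_one_div_of_mul_eq_one_left hkac⟩

/-- Single-edge perturbation, source-node formula. -/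
theorem single_edge_perturbation_source {n : ℕ}
    (W : Matrix (Fin n) (Fin n) ℝ) (π : Fin n → ℝ) (M : Matrix (Fin n) (Fin n) ℝ)
    (hW : RowStochastic W) (hprim : Primitive W) (hπ : IsStationaryDist W π) (hM : IsMFPT W M)
    (r c : Fin n) (hrc : r ≠ c) (hWrc : W r c = 0)
    (θ : ℝ) (hθ0 : 0 < θ) (hθ1 : θ ≤ 1)
    (hself : ∀ j, j ≠ r → W r j < W r r)
    (π' : Fin n → ℝ) (hprim' : Primitive (EdgePerturb W r c θ))
    (hπ' : IsStationaryDist (EdgePerturb W r c θ) π') :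
    0 < M r r + θ * (M c r - M r r + 1) ∧
      π' r = 1 / (M r r + θ * (M c r - M r r + 1)) :=
  single_edge_perturbation_source_general W M hM r c hrc θ π' hπ'
end

section
/- Let W be an n×n row-stochastic, irreducible, aperiodic matrix with stationary distribution π and mean first passage time matrix (m_{ij}), satisfying rational selfishness at node r. Let W̃ be the single-edge perturbation of W by edge (r,c) with weight θ, assumed irreducible and aperiodic, with stationary distribution π̃. Then π_r − π̃_r = θ · π_r · π̃_r · (m_{cr} − m_{rr} + 1), equivalently π̃_r = π_r / (1 + θ·π_r·(m_{cr} − m_{rr} + 1)). -/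
open Matrix Finset Filter

/-!
Multiplying the first-passage equations `M = 𝟙 + W (M − diag M)` on the left by a row vector
`v` gives `(v − vW) · Mᵀ j = ∑ v − (vW)_j M_jj`. For `v = π` the left side vanishes, which is
Kac's formula `π_r M_rr = 1`. For the stationary distribution `π̃` of the perturbed chain,
`π̃ − π̃W = θ π̃_r (e_c − W_r)` is supported on the modified row, and the same identity yields
`π̃_r (M_rr + θ (M_cr − M_rr + 1)) = 1`. Eliminating `M_rr` between the two gives both formulas.
-/

section

variable {n : ℕ} {W M : Matrix (Fin n) (Fin n) ℝ}

theorem IsMFPT.mulVec_col (hM : IsMFPT W M) (j : Fin n) :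
    W *ᵥ Mᵀ j = Mᵀ j - 1 + M j j • Wᵀ j := by
  ext i
  have h := hM.2 i j
  rw [← Finset.sum_filter, Finset.filter_ne', Finset.sum_erase_eq_sub (Finset.mem_univ _)] at h
  simp only [mulVec, dotProduct, transpose_apply, Pi.add_apply, Pi.sub_apply, Pi.one_apply,
    Pi.smul_apply, smul_eq_mul]
  linarith

theorem IsMFPT.sub_vecMul_dotProduct_col (hM : IsMFPT W M) (v : Fin n → ℝ) (j : Fin n) :
    (v - v ᵥ* W) ⬝ᵥ Mᵀ j = ∑ i, v i - (v ᵥ* W) j * M j j := by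
  rw [sub_dotProduct, ← dotProduct_mulVec, hM.mulVec_col, dotProduct_add, dotProduct_sub,
    dotProduct_one, dotProduct_smul, smul_eq_mul, show v ⬝ᵥ Wᵀ j = (v ᵥ* W) j from rfl]
  ring

theorem IsStationaryDist.mul_mfpt_diag_eq_one {π : Fin n → ℝ} (hπ : IsStationaryDist W π)
    (hM : IsMFPT W M) (j : Fin n) : π j * M j j = 1 := by
  have h := hM.sub_vecMul_dotProduct_col π j
  rw [hπ.2.2, sub_self, zero_dotProduct, hπ.2.1] at h
  linarith

theorem vecMul_edgePerturb (v : Fin n → ℝ) (r c : Fin n) (θ : ℝ) :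
    v ᵥ* EdgePerturb W r c θ = v ᵥ* W + (θ * v r) • (Pi.single c 1 - W r) := by
  ext k
  have hrow : ∀ i, v i * EdgePerturb W r c θ i k
      = v i * W i k + if i = r then θ * v r * ((Pi.single c 1 : Fin n → ℝ) k - W r k) else 0 := by
    intro i
    by_cases hi : i = r
    · subst hi
      simp only [EdgePerturb, of_apply, if_true, Pi.single_apply]
      split_ifs <;> ring
    · simp [EdgePerturb, hi]
  simp only [vecMul, dotProduct, hrow, Finset.sum_add_distrib, Finset.sum_ite_eq',
    Finset.mem_univ, if_true, Pi.add_apply, Pi.smul_apply, Pi.sub_apply, smul_eq_mul]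

theorem IsStationaryDist.edgePerturb_mul_mfpt_eq_one {π' : Fin n → ℝ} {r c : Fin n} {θ : ℝ}
    (hrc : r ≠ c) (hπ' : IsStationaryDist (EdgePerturb W r c θ) π') (hM : IsMFPT W M) :
    π' r * (M r r + θ * (M c r - M r r + 1)) = 1 := by
  have hdefect : π' - π' ᵥ* W = (θ * π' r) • (Pi.single c 1 - W r) :=
    sub_eq_of_eq_add' (by rw [← vecMul_edgePerturb, hπ'.2.2])
  have hWr : W r ⬝ᵥ Mᵀ r = M r r - 1 + M r r * W r r :=
    (congrFun (hM.mulVec_col r) r).trans (by simp)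
  have hπ'Wr : (π' ᵥ* W) r = π' r + θ * π' r * W r r := by
    have h := congrFun hdefect r
    simp only [Pi.sub_apply, Pi.smul_apply, Pi.single_eq_of_ne hrc, smul_eq_mul] at h
    linarith
  have h := hM.sub_vecMul_dotProduct_col π' r
  rw [hdefect, smul_dotProduct, sub_dotProduct, single_one_dotProduct, hWr, hπ'Wr, hπ'.2.1,
    smul_eq_mul] at h
  simp only [transpose_apply] at h
  linear_combination h

end

theorem single_edge_perturbation_source_alt_general {n : ℕ}
    (W : Matrix (Fin n) (Fin n) ℝ) (π : Fin n → ℝ) (M : Matrix (Fin n) (Fin n) ℝ)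
    (hπ : IsStationaryDist W π) (hM : IsMFPT W M)
    (r c : Fin n) (hrc : r ≠ c)
    (θ : ℝ)
    (π' : Fin n → ℝ)
    (hπ' : IsStationaryDist (EdgePerturb W r c θ) π') :
    π r - π' r = θ * π r * π' r * (M c r - M r r + 1) ∧
      π' r = π r / (1 + θ * π r * (M c r - M r r + 1)) := by
  have hkac := hπ.mul_mfpt_diag_eq_one hM r
  have hkac' := hπ'.edgePerturb_mul_mfpt_eq_one hrc hM
  have hdiff : π r - π' r = θ * π r * π' r * (M c r - M r r + 1) := by
    linear_combination π' r * hkac - π r * hkac'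
  have hden : π' r * (1 + θ * π r * (M c r - M r r + 1)) = π r := by
    linear_combination -hdiff
  have hπr : π r ≠ 0 := left_ne_zero_of_mul_eq_one hkac
  refine ⟨hdiff, ?_⟩
  rw [eq_div_iff (right_ne_zero_of_mul (hden ▸ hπr)), hden]

/-- `π r − π̃ r = θ · π r · π̃ r · (m c r − m r r + 1)`, equivalently
`π̃ r = π r / (1 + θ · π r · (m c r − m r r + 1))`. -/
theorem single_edge_perturbation_source_alt {n : ℕ}
    (W : Matrix (Fin n) (Fin n) ℝ) (π : Fin n → ℝ) (M : Matrix (Fin n) (Fin n) ℝ)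
    (hW : RowStochastic W) (hprim : Primitive W) (hπ : IsStationaryDist W π) (hM : IsMFPT W M)
    (r c : Fin n) (hrc : r ≠ c) (hWrc : W r c = 0)
    (θ : ℝ) (hθ0 : 0 < θ) (hθ1 : θ ≤ 1)
    (hself : ∀ j, j ≠ r → W r j < W r r)
    (π' : Fin n → ℝ) (hprim' : Primitive (EdgePerturb W r c θ))
    (hπ' : IsStationaryDist (EdgePerturb W r c θ) π') :
    π r - π' r = θ * π r * π' r * (M c r - M r r + 1) ∧
      π' r = π r / (1 + θ * π r * (M c r - M r r + 1)) :=
  single_edge_perturbation_source_alt_general W π M hπ hM r c hrc θ π' hπ'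
end

section
/- Let n ≥ 2, let W_kc be the uniformly weighted matrix of the graph G_kc on 2n vertices obtained from the complete graph K_{2n} by deleting the perfect matching C = {(2ℓ−1, 2ℓ) : ℓ = 1,…,n}, with m = |E(G_kc)| edges and eigenvector centrality π. Fix z ∈ [0,1]^n, s ∈ [0,1], and 1 ≤ k ≤ n; set x̃ = z ⊗ 𝟙₂ (the vector duplicating each z_ℓ twice) and x = (s·𝟙 + m·x̃)/(m + k). Then for every subset S ⊆ C with |S| = k, the eigenvector centrality π̃ of the uniformly weighted matrix of G_kc with the edges S added satisfies |⟨π̃, x̃⟩ − ⟨π, x⟩| = (1/(m + k)) · | Σ_{ℓ : (2ℓ−1,2ℓ) ∈ S} z_ℓ − s |. -/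
open Finset

/-- The graph `G_kc` on `2n` vertices: the complete graph `K_{2n}` minus the perfect
matching `C = {(2ℓ, 2ℓ+1) : ℓ = 0,…,n−1}` (vertices `2ℓ` and `2ℓ+1` are partners). -/
def Gkc (n : ℕ) : SimpleGraph (Fin (2 * n)) where
  Adj i j := i ≠ j ∧ (i : ℕ) / 2 ≠ (j : ℕ) / 2
  symm := ⟨by rintro i j ⟨h1, h2⟩; exact ⟨h1.symm, h2.symm⟩⟩
  loopless := ⟨by rintro i ⟨h1, _⟩; exact h1 rfl⟩

/-- `G_kc` with the matching edges `{(2ℓ, 2ℓ+1) : ℓ ∈ T}` added. -/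
def GkcAdd (n : ℕ) (T : Finset (Fin n)) : SimpleGraph (Fin (2 * n)) where
  Adj i j := i ≠ j ∧
    ((i : ℕ) / 2 ≠ (j : ℕ) / 2 ∨ ∃ ℓ ∈ T, (i : ℕ) / 2 = (ℓ : ℕ) ∧ (j : ℕ) / 2 = (ℓ : ℕ))
  symm := ⟨by
    rintro i j ⟨h1, h2⟩
    refine ⟨h1.symm, ?_⟩
    rcases h2 with h2 | ⟨ℓ, hl, ha, hb⟩
    · exact Or.inl h2.symm
    · exact Or.inr ⟨ℓ, hl, hb, ha⟩⟩
  loopless := ⟨by rintro i ⟨h1, _⟩; exact h1 rfl⟩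

noncomputable instance (n : ℕ) : DecidableRel (Gkc n).Adj := Classical.decRel _

noncomputable instance (n : ℕ) (T : Finset (Fin n)) :
    DecidableRel (GkcAdd n T).Adj := Classical.decRel _

/-- The Kronecker product `z ⊗ 𝟙₂ : ℝ^{2n}`, duplicating each entry of `z` twice. -/
def dupVec {n : ℕ} (z : Fin n → ℝ) : Fin (2 * n) → ℝ :=
  fun v => z ⟨(v : ℕ) / 2, by have := v.isLt; omega⟩

/-!
`G_kc` is `(2n − 2)`-regular, so `π = 𝟙/(2n)` and `m = n(2n − 2)`; adding the matching edges
of `S` raises the degrees of their `2k` endpoints by one. Since `x̃` is constant on each pair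
`{2ℓ, 2ℓ+1}`, both inner products reduce to sums over the pairs:
`⟨π̃, x̃⟩ = ((2n − 2)·∑ z + ∑_{ℓ ∈ S} z_ℓ)/(m + k)` and `⟨π, x⟩ = (s + (2n − 2)·∑ z)/(m + k)`,
so the `(2n − 2)·∑ z` terms cancel in the difference.
-/

namespace SimpleGraph.IsRegularOfDegree

variable {V : Type*} [Fintype V] {G : SimpleGraph V} [DecidableRel G.Adj] {d : ℕ}

theorem two_mul_card_edgeFinset (hG : G.IsRegularOfDegree d) :
    2 * #G.edgeFinset = Fintype.card V * d := by
  rw [← sum_degrees_eq_twice_card_edges]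
  simp [hG.degree_eq]

theorem degree_div_two_mul_card_edgeFinset (hG : G.IsRegularOfDegree d) (hd : d ≠ 0) (v : V) :
    (G.degree v : ℝ) / (2 * #G.edgeFinset) = 1 / Fintype.card V := by
  have hV : (Fintype.card V : ℝ) ≠ 0 := by
    exact_mod_cast (Fintype.card_pos_iff.mpr ⟨v⟩).ne'
  rw [hG.degree_eq, ← Nat.cast_ofNat, ← Nat.cast_mul, hG.two_mul_card_edgeFinset]
  push_cast
  field_simp

end SimpleGraph.IsRegularOfDegree

section Pairs

variable {n : ℕ}

def pairIndex (v : Fin (2 * n)) : Fin n := ⟨v / 2, by omega⟩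

theorem dupVec_apply (z : Fin n → ℝ) (v : Fin (2 * n)) : dupVec z v = z (pairIndex v) := rfl

theorem card_filter_pairIndex_eq (ℓ : Fin n) : #{v : Fin (2 * n) | pairIndex v = ℓ} = 2 := by
  rw [card_eq_two]
  refine ⟨⟨2 * ℓ, by omega⟩, ⟨2 * ℓ + 1, by omega⟩, by simp [Fin.ext_iff], ?_⟩
  ext v
  simp only [mem_filter, mem_univ, true_and, mem_insert, mem_singleton, pairIndex, Fin.ext_iff]
  omega

theorem card_filter_pairIndex_ne (ℓ : Fin n) :
    #{v : Fin (2 * n) | pairIndex v ≠ ℓ} = 2 * n - 2 := by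
  simp_rw [ne_eq]
  rw [filter_not, card_sdiff_of_subset (filter_subset _ _), card_filter_pairIndex_eq, card_univ,
    Fintype.card_fin]

theorem sum_comp_pairIndex {M : Type*} [AddCommMonoid M] (f : Fin n → M) :
    ∑ v : Fin (2 * n), f (pairIndex v) = 2 • ∑ ℓ, f ℓ := by
  rw [← sum_fiberwise' univ pairIndex f, smul_sum]
  simp only [sum_const, card_filter_pairIndex_eq]

theorem sum_dupVec (z : Fin n → ℝ) : ∑ v, dupVec z v = 2 * ∑ ℓ, z ℓ := by
  simp only [dupVec_apply, sum_comp_pairIndex, nsmul_eq_mul, Nat.cast_ofNat]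

end Pairs

section Degrees

variable {n : ℕ}

theorem Gkc_neighborFinset (v : Fin (2 * n)) :
    (Gkc n).neighborFinset v = ({j | pairIndex j ≠ pairIndex v} : Finset (Fin (2 * n))) := by
  ext j
  rw [SimpleGraph.mem_neighborFinset]
  simp only [Gkc, mem_filter, mem_univ, true_and, pairIndex, ne_eq, Fin.ext_iff]
  omega

theorem Gkc_isRegularOfDegree : (Gkc n).IsRegularOfDegree (2 * n - 2) := fun v => by
  rw [← SimpleGraph.card_neighborFinset_eq_degree, Gkc_neighborFinset, card_filter_pairIndex_ne]

theorem GkcAdd_neighborFinset_of_mem {T : Finset (Fin n)} {v : Fin (2 * n)}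
    (hv : pairIndex v ∈ T) :
    (GkcAdd n T).neighborFinset v = univ.erase v := by
  ext j
  rw [SimpleGraph.mem_neighborFinset]
  simp only [GkcAdd, mem_erase, mem_univ, and_true]
  refine ⟨fun h => h.1.symm, fun hj => ⟨hj.symm, ?_⟩⟩
  by_cases hvj : (v : ℕ) / 2 = (j : ℕ) / 2
  · exact Or.inr ⟨pairIndex v, hv, rfl, hvj.symm⟩
  · exact Or.inl hvj

theorem GkcAdd_neighborFinset_of_notMem {T : Finset (Fin n)} {v : Fin (2 * n)}
    (hv : pairIndex v ∉ T) :
    (GkcAdd n T).neighborFinset v = (Gkc n).neighborFinset v := by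
  ext j
  rw [SimpleGraph.mem_neighborFinset, SimpleGraph.mem_neighborFinset]
  simp only [GkcAdd, Gkc]
  refine and_congr_right fun _ => or_iff_left ?_
  rintro ⟨ℓ, hℓ, hvℓ, -⟩
  exact hv (by rwa [show pairIndex v = ℓ from Fin.ext hvℓ])

theorem GkcAdd_degree (T : Finset (Fin n)) (v : Fin (2 * n)) :
    (GkcAdd n T).degree v = 2 * n - 2 + if pairIndex v ∈ T then 1 else 0 := by
  rw [← SimpleGraph.card_neighborFinset_eq_degree]
  split_ifs with hv
  · rw [GkcAdd_neighborFinset_of_mem hv, card_erase_of_mem (mem_univ v), card_univ,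
      Fintype.card_fin]
    have := v.isLt
    omega
  · rw [GkcAdd_neighborFinset_of_notMem hv, SimpleGraph.card_neighborFinset_eq_degree,
      Gkc_isRegularOfDegree.degree_eq, add_zero]

theorem sum_GkcAdd_degree_mul_dupVec (T : Finset (Fin n)) (z : Fin n → ℝ) :
    ∑ v, ((GkcAdd n T).degree v : ℝ) * dupVec z v =
      2 * (((2 * n - 2 : ℕ) : ℝ) * ∑ ℓ, z ℓ + ∑ ℓ ∈ T, z ℓ) := by
  simp only [GkcAdd_degree, dupVec_apply]
  rw [sum_comp_pairIndex (fun ℓ => (((2 * n - 2 + if ℓ ∈ T then 1 else 0 : ℕ)) : ℝ) * z ℓ)]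
  simp only [nsmul_eq_mul, Nat.cast_ofNat, Nat.cast_add, Nat.cast_ite, Nat.cast_one,
    Nat.cast_zero, add_mul, ite_mul, one_mul, zero_mul, sum_add_distrib, ← mul_sum, sum_ite_mem,
    univ_inter]

end Degrees

theorem kssp_reduction_objective_general (n : ℕ) (hn : 2 ≤ n)
    (z : Fin n → ℝ) (s : ℝ) (k : ℕ) (T : Finset (Fin n)) :
    let m : ℝ := ((Gkc n).edgeFinset.card : ℝ)
    let π : Fin (2 * n) → ℝ := fun v => ((Gkc n).degree v : ℝ) / (2 * m)
    let π' : Fin (2 * n) → ℝ := fun v => ((GkcAdd n T).degree v : ℝ) / (2 * (m + k))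
    let x' : Fin (2 * n) → ℝ := dupVec z
    let x : Fin (2 * n) → ℝ := fun v => (s * 1 + m * x' v) / (m + k)
    |(∑ v, π' v * x' v) - (∑ v, π v * x v)| =
      (1 / (m + k)) * |(∑ ℓ ∈ T, z ℓ) - s| := by
  intro m π π' x' x
  set d : ℝ := ((2 * n - 2 : ℕ) : ℝ)
  have hd : 0 < d := Nat.cast_pos.mpr (by omega)
  have hm : m = n * d := by
    have h := congrArg (Nat.cast (R := ℝ))
      (Gkc_isRegularOfDegree (n := n)).two_mul_card_edgeFinset
    push_cast [Fintype.card_fin] at h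
    linarith
  have hmk : 0 < m + k := by rw [hm]; positivity
  have hπ' : ∑ v, π' v * x' v = (d * ∑ ℓ, z ℓ + ∑ ℓ ∈ T, z ℓ) / (m + k) := by
    simp only [π', x', div_mul_eq_mul_div, ← sum_div, sum_GkcAdd_degree_mul_dupVec]
    field_simp
    ring
  have hπ : ∑ v, π v * x v = (s + d * ∑ ℓ, z ℓ) / (m + k) := by
    have hπv (v : Fin (2 * n)) : π v = 1 / (2 * n) := by
      simpa using Gkc_isRegularOfDegree.degree_div_two_mul_card_edgeFinset (by omega) v
    simp only [hπv, x, x', ← mul_sum, ← sum_div, sum_add_distrib, ← mul_sum, sum_dupVec,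
      sum_const, card_univ, Fintype.card_fin, nsmul_eq_mul, hm]
    field_simp
    push_cast
    ring
  rw [hπ', hπ, ← sub_div, abs_div, abs_of_pos hmk]
  ring_nf

/-- For every `S ⊆ C` with `|S| = k` (encoded as `T ⊆ {1,…,n}` with
`|T| = k`), with `x̃ = z ⊗ 𝟙₂`, `x = (s·𝟙 + m·x̃)/(m + k)`:
`|⟨π̃, x̃⟩ − ⟨π, x⟩| = (1/(m+k)) · |∑_{ℓ∈T} z ℓ − s|`. -/
theorem kssp_reduction_objective (n : ℕ) (hn : 2 ≤ n)
    (z : Fin n → ℝ) (hz : ∀ ℓ, z ℓ ∈ Set.Icc (0 : ℝ) 1)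
    (s : ℝ) (hs : s ∈ Set.Icc (0 : ℝ) 1)
    (k : ℕ) (hk1 : 1 ≤ k) (hkn : k ≤ n)
    (T : Finset (Fin n)) (hT : T.card = k) :
    let m : ℝ := ((Gkc n).edgeFinset.card : ℝ)
    let π : Fin (2 * n) → ℝ := fun v => ((Gkc n).degree v : ℝ) / (2 * m)
    let π' : Fin (2 * n) → ℝ := fun v => ((GkcAdd n T).degree v : ℝ) / (2 * (m + k))
    let x' : Fin (2 * n) → ℝ := dupVec z
    let x : Fin (2 * n) → ℝ := fun v => (s * 1 + m * x' v) / (m + k)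
    |(∑ v, π' v * x' v) - (∑ v, π v * x v)| =
      (1 / (m + k)) * |(∑ ℓ ∈ T, z ℓ) - s| :=
  kssp_reduction_objective_general n hn z s k T
end
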